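/- arXiv:2209.12337 — 7 statements merged into one kernel-verified Lean document; each statement's English description precedes it below -/
import Mathlib

section
/- For any Boolean algebra B, the twist conjunction ∧̃ on B_LETK^B, defined by (z₁,z₂,z₃) ∧̃ (w₁,w₂,w₃) = (z₁⊓w₁, z₂⊔w₂, (z₁⊓z₃⊓w₁⊓w₃) ⊔ (z₂⊓z₃) ⊔ (w₂⊓w₃)), is well-defined: the resulting triple again lies in B_LETK^B. -/
/-!
The third component of `tand z w` lies below `z.1 ⊓ w.1 ⊔ z.2.1 ⊔ w.2.1` joinand by joinand.
For disjointness, distributivity gives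
`(z.2.1 ⊔ w.2.1) ⊓ (tand z w).2.2 ≤ z.2.1 ⊓ z.2.2 ⊔ w.2.1 ⊓ w.2.2`, so the meet of the three
components of `tand z w` lies below `z.1 ⊓ z.2.1 ⊓ z.2.2 ⊔ w.1 ⊓ w.2.1 ⊓ w.2.2 = ⊥`.
-/

/-- The set of snapshots over a Boolean algebra `B`. -/
def BLETK (B : Type*) [BooleanAlgebra B] : Set (B × B × B) :=
  {z | z.2.2 ≤ z.1 ⊔ z.2.1 ∧ z.1 ⊓ z.2.1 ⊓ z.2.2 = ⊥}

variable {B : Type*} [BooleanAlgebra B]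

/-- Twist conjunction. -/
def tand (z w : B × B × B) : B × B × B :=
  (z.1 ⊓ w.1, z.2.1 ⊔ w.2.1,
   (z.1 ⊓ z.2.2 ⊓ w.1 ⊓ w.2.2) ⊔ (z.2.1 ⊓ z.2.2) ⊔ (w.2.1 ⊓ w.2.2))

/-- Twist disjunction. -/
def tor (z w : B × B × B) : B × B × B :=
  (z.1 ⊔ w.1, z.2.1 ⊓ w.2.1,
   (z.2.1 ⊓ z.2.2 ⊓ w.2.1 ⊓ w.2.2) ⊔ (z.1 ⊓ z.2.2) ⊔ (w.1 ⊓ w.2.2))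

/-- Twist negation. -/
def tneg (z : B × B × B) : B × B × B := (z.2.1, z.1, z.2.2)

/-- Twist classicality operator. -/
def tcirc (z : B × B × B) : B × B × B := (z.2.2, (z.2.2)ᶜ, ⊤)

/-- Twist implication. -/
def timp (z w : B × B × B) : B × B × B :=
  (z.1ᶜ ⊔ w.1, z.1 ⊓ w.2.1,
   (z.1 ⊓ w.2.1 ⊓ w.2.2) ⊔ (z.2.1 ⊓ z.2.2) ⊔ (w.1 ⊓ w.2.2))

section DistribLattice

variable {α : Type*} [DistribLattice α]

theorem sup_inf_inf_le (a b c d : α) : (a ⊔ b) ⊓ (c ⊓ d) ≤ a ⊓ c ⊔ b ⊓ d := by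
  rw [inf_sup_right]
  exact sup_le_sup (inf_le_inf_left a inf_le_left) (inf_le_inf_left b inf_le_right)

theorem inf_inf_sup_le (a b c d : α) : a ⊓ b ⊓ (c ⊔ d) ≤ a ⊓ c ⊔ b ⊓ d := by
  rw [inf_sup_left]
  exact sup_le_sup (inf_le_inf_right c inf_le_left) (inf_le_inf_right d inf_le_right)

end DistribLattice

theorem tand_snd_snd_le (z w : B × B × B) : (tand z w).2.2 ≤ (tand z w).1 ⊔ (tand z w).2.1 := by
  obtain ⟨a, b, c⟩ := z
  obtain ⟨d, e, f⟩ := w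
  have hacdf : a ⊓ c ⊓ d ⊓ f ≤ a ⊓ d :=
    le_inf (inf_le_left.trans (inf_le_left.trans inf_le_left)) (inf_le_left.trans inf_le_right)
  exact (sup_le_sup (sup_le_sup hacdf inf_le_left) inf_le_left).trans_eq (sup_assoc ..)

theorem tand_snd_fst_inf_snd_snd_le (z w : B × B × B) :
    (tand z w).2.1 ⊓ (tand z w).2.2 ≤ z.2.1 ⊓ z.2.2 ⊔ w.2.1 ⊓ w.2.2 := by
  obtain ⟨a, b, c⟩ := z
  obtain ⟨d, e, f⟩ := w
  have hacdf : a ⊓ c ⊓ d ⊓ f ≤ c ⊓ f :=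
    inf_le_inf_right f (inf_le_left.trans inf_le_right)
  show (b ⊔ e) ⊓ (a ⊓ c ⊓ d ⊓ f ⊔ b ⊓ c ⊔ e ⊓ f) ≤ b ⊓ c ⊔ e ⊓ f
  rw [sup_assoc, inf_sup_left]
  exact sup_le ((inf_le_inf_left _ hacdf).trans (sup_inf_inf_le b e c f)) inf_le_right

theorem stmt1 (z w : B × B × B) (hz : z ∈ BLETK B) (hw : w ∈ BLETK B) :
    tand z w ∈ BLETK B := by
  refine ⟨tand_snd_snd_le z w, le_bot_iff.1 ?_⟩
  calc (tand z w).1 ⊓ (tand z w).2.1 ⊓ (tand z w).2.2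
      = z.1 ⊓ w.1 ⊓ ((tand z w).2.1 ⊓ (tand z w).2.2) := inf_assoc ..
    _ ≤ z.1 ⊓ w.1 ⊓ (z.2.1 ⊓ z.2.2 ⊔ w.2.1 ⊓ w.2.2) :=
      inf_le_inf_left _ (tand_snd_fst_inf_snd_snd_le z w)
    _ ≤ z.1 ⊓ (z.2.1 ⊓ z.2.2) ⊔ w.1 ⊓ (w.2.1 ⊓ w.2.2) := inf_inf_sup_le ..
    _ = ⊥ := by rw [← inf_assoc, ← inf_assoc, hz.2, hw.2, sup_bot_eq]
end

section
/- For any Boolean algebra B, the twist disjunction ∨̃ on B_LETK^B, defined by (z₁,z₂,z₃) ∨̃ (w₁,w₂,w₃) = (z₁⊔w₁, z₂⊓w₂, (z₂⊓z₃⊓w₂⊓w₃) ⊔ (z₁⊓z₃) ⊔ (w₁⊓w₃)), is well-defined: the resulting triple again lies in B_LETK^B. -/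
variable {B : Type*} [BooleanAlgebra B]

theorem tor_thd_le_fst_sup_snd (z w : B × B × B) :
    (tor z w).2.2 ≤ (tor z w).1 ⊔ (tor z w).2.1 := by
  obtain ⟨a, b, c⟩ := z
  obtain ⟨d, e, f⟩ := w
  refine sup_le (sup_le ?_ ?_) ?_
  · exact le_sup_of_le_right (inf_le_left.trans (inf_le_inf_right e inf_le_left))
  · exact le_sup_of_le_left (le_sup_of_le_left inf_le_left)
  · exact le_sup_of_le_left (le_sup_of_le_right inf_le_left)

theorem tor_fst_inf_thd_le (z w : B × B × B) :
    (tor z w).1 ⊓ (tor z w).2.2 ≤ z.1 ⊓ z.2.2 ⊔ w.1 ⊓ w.2.2 := by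
  obtain ⟨a, b, c⟩ := z
  obtain ⟨d, e, f⟩ := w
  calc (a ⊔ d) ⊓ (b ⊓ c ⊓ e ⊓ f ⊔ a ⊓ c ⊔ d ⊓ f)
      ≤ (a ⊔ d) ⊓ (c ⊓ f ⊔ (a ⊓ c ⊔ d ⊓ f)) := by
        rw [sup_assoc]
        gcongr
        exact inf_le_left.trans inf_le_right
    _ = (a ⊔ d) ⊓ (c ⊓ f) ⊔ (a ⊔ d) ⊓ (a ⊓ c ⊔ d ⊓ f) := inf_sup_left _ _ _
    _ ≤ (a ⊓ c ⊔ d ⊓ f) ⊔ (a ⊓ c ⊔ d ⊓ f) := sup_le_sup (sup_inf_inf_le a d c f) inf_le_right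
    _ = a ⊓ c ⊔ d ⊓ f := sup_idem _

theorem tor_fst_inf_snd_inf_thd_le (z w : B × B × B) :
    (tor z w).1 ⊓ (tor z w).2.1 ⊓ (tor z w).2.2 ≤
      z.1 ⊓ z.2.1 ⊓ z.2.2 ⊔ w.1 ⊓ w.2.1 ⊓ w.2.2 := by
  obtain ⟨a, b, c⟩ := z
  obtain ⟨d, e, f⟩ := w
  set t := (tor (a, b, c) (d, e, f)).2.2
  calc (a ⊔ d) ⊓ (b ⊓ e) ⊓ t
      = b ⊓ e ⊓ ((a ⊔ d) ⊓ t) := by ac_rfl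
    _ ≤ b ⊓ e ⊓ (a ⊓ c ⊔ d ⊓ f) := inf_le_inf_left _ (tor_fst_inf_thd_le (a, b, c) (d, e, f))
    _ ≤ b ⊓ (a ⊓ c) ⊔ e ⊓ (d ⊓ f) := inf_inf_sup_le _ _ _ _
    _ = a ⊓ b ⊓ c ⊔ d ⊓ e ⊓ f := by ac_rfl

theorem stmt2 (z w : B × B × B) (hz : z ∈ BLETK B) (hw : w ∈ BLETK B) :
    tor z w ∈ BLETK B := by
  refine ⟨tor_thd_le_fst_sup_snd z w, eq_bot_iff.2 ?_⟩
  calc _ ≤ z.1 ⊓ z.2.1 ⊓ z.2.2 ⊔ w.1 ⊓ w.2.1 ⊓ w.2.2 := tor_fst_inf_snd_inf_thd_le z w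
    _ = ⊥ := by rw [hz.2, hw.2, sup_bot_eq]
end

section
/- For any Boolean algebra B, the twist operations satisfy the absorption laws on B_LETK^B: z ∨̃ (z ∧̃ w) = z and z ∧̃ (z ∨̃ w) = z for all z, w ∈ B_LETK^B. -/
variable {B : Type*} [BooleanAlgebra B]

/-! Absorption in the twist structure: the first two coordinates are plain lattice absorption.
In the third coordinate of `z ∨̃ (z ∧̃ w)`, the term coming from `z.2.1` collapses to `z.2.1 ⊓ z.2.2`,
which together with `z.1 ⊓ z.2.2` recovers `z.2.2` because `z.2.2 ≤ z.1 ⊔ z.2.1`; the remaining term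
`z.1 ⊓ w.1 ⊓ (z ∧̃ w).2.2` lies below `z.2.2` because `w.1 ⊓ w.2.1 ⊓ w.2.2 = ⊥`. Negation swaps the
two operations, which turns the first absorption law into the second. -/

theorem tneg_tneg {α : Type*} (z : α × α × α) : tneg (tneg z) = z := rfl

theorem tneg_tand (z w : B × B × B) : tneg (tand z w) = tor (tneg z) (tneg w) := rfl

theorem tneg_tor (z w : B × B × B) : tneg (tor z w) = tand (tneg z) (tneg w) := rfl

theorem tor_tand_self {z w : B × B × B} (hz : z.2.2 ≤ z.1 ⊔ z.2.1)
    (hw : w.1 ⊓ w.2.1 ⊓ w.2.2 = ⊥) : tor z (tand z w) = z := by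
  obtain ⟨a, b, c⟩ := z
  obtain ⟨d, e, f⟩ := w
  set t := a ⊓ c ⊓ d ⊓ f ⊔ b ⊓ c ⊔ e ⊓ f
  have hbc : b ⊓ c ⊓ (b ⊔ e) ⊓ t = b ⊓ c := by
    have hbe : b ⊓ c ≤ b ⊔ e := inf_le_left.trans le_sup_left
    have hbt : b ⊓ c ≤ t := le_sup_right.trans le_sup_left
    rw [inf_eq_left.2 hbe, inf_eq_left.2 hbt]
  have hadt : a ⊓ d ⊓ t ≤ c := by
    have ht : t ≤ c ⊔ e ⊓ f :=
      sup_le_sup_right (sup_le (inf_le_left.trans (inf_le_left.trans inf_le_right)) inf_le_right) _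
    have hd : Disjoint d (e ⊓ f) := disjoint_iff.2 (by rw [← inf_assoc]; exact hw)
    exact (hd.mono_left (inf_le_left.trans inf_le_right)).left_le_of_le_sup_right
      (inf_le_right.trans ht)
  refine Prod.ext sup_inf_self (Prod.ext inf_sup_self ?_)
  change b ⊓ c ⊓ (b ⊔ e) ⊓ t ⊔ a ⊓ c ⊔ a ⊓ d ⊓ t = c
  rw [hbc, ← inf_sup_right, inf_eq_right.2 (hz.trans_eq (sup_comm _ _))]
  exact sup_eq_left.2 hadt

theorem tand_tor_self {z w : B × B × B} (hz : z.2.2 ≤ z.1 ⊔ z.2.1)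
    (hw : w.1 ⊓ w.2.1 ⊓ w.2.2 = ⊥) : tand z (tor z w) = z := by
  have hw' : (tneg w).1 ⊓ (tneg w).2.1 ⊓ (tneg w).2.2 = ⊥ := by
    change w.2.1 ⊓ w.1 ⊓ w.2.2 = ⊥
    rwa [inf_comm w.2.1]
  rw [← tneg_tneg z, ← tneg_tneg w, ← tneg_tand, ← tneg_tor,
    tor_tand_self (z := tneg z) (hz.trans_eq (sup_comm _ _)) hw']

theorem stmt6 (z w : B × B × B) (hz : z ∈ BLETK B) (hw : w ∈ BLETK B) :
    tor z (tand z w) = z ∧ tand z (tor z w) = z :=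
  ⟨tor_tand_self hz.1 hw.2, tand_tor_self hz.1 hw.2⟩
end

section
/- In the lattice B_LETK^B (with lattice order defined by z ≤ w iff z = z ∧̃ w), one has z ≤ w if and only if z₁ ≤ w₁, z₂ ≥ w₂, z₂ ⊓ z₃ ≥ w₂ ⊓ w₃, and z₃ ≤ (z₁ ⊓ w₃) ⊔ z₂. -/
variable {B : Type*} [BooleanAlgebra B]

theorem inf_sup_eq_left_iff {α : Type*} [DistribLattice α] {c p q : α} :
    c ⊓ p ⊔ q = c ↔ q ≤ c ∧ c ≤ p ⊔ q := by
  constructor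
  · intro h
    exact ⟨h ▸ le_sup_right, h ▸ sup_le_sup_right inf_le_right q⟩
  · rintro ⟨hqc, hc⟩
    calc c ⊓ p ⊔ q = c ⊓ p ⊔ c ⊓ q := by rw [inf_eq_right.mpr hqc]
      _ = c ⊓ (p ⊔ q) := inf_sup_left c p q |>.symm
      _ = c := inf_eq_left.mpr hc

theorem tand_eq_self_iff {z w : B × B × B} :
    tand z w = z ↔ z.1 ≤ w.1 ∧ w.2.1 ≤ z.2.1 ∧ (tand z w).2.2 = z.2.2 := by
  simp only [Prod.ext_iff, tand, inf_eq_left, sup_eq_left]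

theorem tand_snd_snd_of_fst_le {z w : B × B × B} (h : z.1 ≤ w.1) :
    (tand z w).2.2 = z.2.2 ⊓ (z.1 ⊓ w.2.2 ⊔ z.2.1) ⊔ w.2.1 ⊓ w.2.2 := by
  have hzw : z.1 ⊓ z.2.2 ⊓ w.1 ⊓ w.2.2 = z.2.2 ⊓ (z.1 ⊓ w.2.2) := by
    rw [inf_right_comm z.1, inf_eq_left.mpr h]; ac_rfl
  rw [tand, hzw, inf_comm z.2.1, ← inf_sup_left]

theorem stmt8_general (z w : B × B × B) :
    tand z w = z ↔
      (z.1 ≤ w.1 ∧ w.2.1 ≤ z.2.1 ∧ w.2.1 ⊓ w.2.2 ≤ z.2.1 ⊓ z.2.2 ∧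
        z.2.2 ≤ (z.1 ⊓ w.2.2) ⊔ z.2.1) := by
  rw [tand_eq_self_iff]
  refine and_congr_right fun h₁ => and_congr_right fun h₂ => ?_
  have hw : w.2.1 ⊓ w.2.2 ≤ z.2.1 := inf_le_left.trans h₂
  rw [tand_snd_snd_of_fst_le h₁, inf_sup_eq_left_iff, le_inf_iff,
    sup_eq_left.mpr (hw.trans le_sup_right)]
  exact and_congr_left' (and_iff_right hw).symm

theorem stmt8 (z w : B × B × B) (hz : z ∈ BLETK B) (hw : w ∈ BLETK B) :
    tand z w = z ↔
      (z.1 ≤ w.1 ∧ w.2.1 ≤ z.2.1 ∧ w.2.1 ⊓ w.2.2 ≤ z.2.1 ⊓ z.2.2 ∧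
        z.2.2 ≤ (z.1 ⊓ w.2.2) ⊔ z.2.1) :=
  stmt8_general z w
end

section
/- In the six-valued matrix M₆, the equivalence connective defined by z ≡̃ w = (z ↔̃ w) ∧̃ (¬̃z ↔̃ ¬̃w) ∧̃ (∘̃z ↔̃ ∘̃w) satisfies: (z ≡̃ w) is designated (i.e., has first coordinate 1) if and only if z = w, for all z, w in the six-element domain. -/
variable {B : Type*} [BooleanAlgebra B]

/-- The six truth-values over the two-element Boolean algebra `Bool`. -/
def vT : Bool × Bool × Bool := (true, false, true)
def vT0 : Bool × Bool × Bool := (true, false, false)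
def vb : Bool × Bool × Bool := (true, true, false)
def vn : Bool × Bool × Bool := (false, false, false)
def vF0 : Bool × Bool × Bool := (false, true, false)
def vF : Bool × Bool × Bool := (false, true, true)


/-- Twist bi-implication. -/
def tiff (z w : Bool × Bool × Bool) : Bool × Bool × Bool :=
  tand (timp z w) (timp w z)

/-- The equivalence connective of `LET_K+`. -/
def tequiv (z w : Bool × Bool × Bool) : Bool × Bool × Bool :=
  tand (tand (tiff z w) (tiff (tneg z) (tneg w))) (tiff (tcirc z) (tcirc w))


/-! The first coordinate of `z →̃ w` is the Boolean implication `z₁ ⇨ w₁`, so that of `z ↔̃ w`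
is the biconditional `z₁ ⇔ w₁`. Since `¬̃` and `∘̃` move the second and third coordinates into
first position, the first coordinate of `z ≡̃ w` is `(z₁ ⇔ w₁) ⊓ (z₂ ⇔ w₂) ⊓ (z₃ ⇔ w₃)`, which is
`⊤` exactly when `z` and `w` agree coordinatewise. -/

open scoped symmDiff

theorem tand_fst (z w : B × B × B) : (tand z w).1 = z.1 ⊓ w.1 := rfl

theorem timp_fst (z w : B × B × B) : (timp z w).1 = z.1 ⇨ w.1 := by
  rw [himp_eq, sup_comm]
  rfl

theorem tiff_fst (z w : Bool × Bool × Bool) : (tiff z w).1 = z.1 ⇔ w.1 := by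
  rw [tiff, tand_fst, timp_fst, timp_fst, bihimp, inf_comm]

theorem tequiv_fst (z w : Bool × Bool × Bool) :
    (tequiv z w).1 = (z.1 ⇔ w.1) ⊓ (z.2.1 ⇔ w.2.1) ⊓ (z.2.2 ⇔ w.2.2) := by
  simp only [tequiv, tand_fst, tiff_fst, tneg, tcirc]

theorem stmt10_general (z w : Bool × Bool × Bool) :
    (tequiv z w).1 = true ↔ z = w := by
  change (tequiv z w).1 = ⊤ ↔ z = w
  simp only [tequiv_fst, inf_eq_top_iff, bihimp_eq_top, Prod.ext_iff, and_assoc]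

theorem stmt10 (z w : Bool × Bool × Bool) (hz : z ∈ BLETK Bool)
    (hw : w ∈ BLETK Bool) :
    (tequiv z w).1 = true ↔ z = w :=
  stmt10_general z w
end

section
/- The six-valued lattice L6 (order T ≥ T₀ ≥ each of {n, b} ≥ F₀ ≥ F, with n and b incomparable) is a lattice whose meet and join coincide with the twist operations ∧̃ and ∨̃ of M₆ restricted to the six elements, and its restriction to {T₀, b, n, F₀} is (order-isomorphic to) Belnap's logical lattice L4. -/
variable {B : Type*} [BooleanAlgebra B]

/-- Level of a truth-value in the lattice L6 (n and b share a level). -/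
def lvl (z : Bool × Bool × Bool) : ℕ :=
  if z = vF then 0 else if z = vF0 then 1
  else if z = vT0 then 3 else if z = vT then 4 else 2

/-- The order of the lattice L6: `F ≤ F₀ ≤ n, b ≤ T₀ ≤ T`, with `n`, `b`
incomparable. -/
def le6 (z w : Bool × Bool × Bool) : Prop := z = w ∨ lvl z < lvl w

/- Over the two-element Boolean algebra the snapshot conditions `z₃ ≤ z₁ ⊔ z₂` and
`z₁ ⊓ z₂ ⊓ z₃ = ⊥` exclude exactly `(0,0,1)` and `(1,1,1)`, leaving the six truth-values
of L6; every claim then becomes a finite check on them. -/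

def L6 : Finset (Bool × Bool × Bool) := {vT, vT0, vb, vn, vF0, vF}

instance : DecidableRel le6 := fun _ _ => inferInstanceAs (Decidable (_ ∨ _))

theorem mem_BLETK_bool_iff {z : Bool × Bool × Bool} : z ∈ BLETK Bool ↔ z ∈ L6 := by
  rw [BLETK, Set.mem_ofPred_eq]
  revert z
  decide

theorem tand_isMeet_le6 :
    ∀ z ∈ L6, ∀ w ∈ L6, le6 (tand z w) z ∧ le6 (tand z w) w ∧
      ∀ u ∈ L6, le6 u z → le6 u w → le6 u (tand z w) := by
  decide

theorem tor_isJoin_le6 :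
    ∀ z ∈ L6, ∀ w ∈ L6, le6 z (tor z w) ∧ le6 w (tor z w) ∧
      ∀ u ∈ L6, le6 z u → le6 w u → le6 (tor z w) u := by
  decide

theorem le6_iff_belnap {z w : Bool × Bool × Bool}
    (hz : z ∈ ({vT0, vb, vn, vF0} : Set (Bool × Bool × Bool)))
    (hw : w ∈ ({vT0, vb, vn, vF0} : Set (Bool × Bool × Bool))) :
    le6 z w ↔ (z = w ∨ z = vF0 ∨ w = vT0) := by
  rcases hz with rfl | rfl | rfl | rfl <;> rcases hw with rfl | rfl | rfl | rfl <;> decide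

theorem stmt14 :
    -- `∧̃` is the meet of L6
    (∀ z ∈ BLETK Bool, ∀ w ∈ BLETK Bool,
      le6 (tand z w) z ∧ le6 (tand z w) w ∧
        ∀ u ∈ BLETK Bool, le6 u z → le6 u w → le6 u (tand z w)) ∧
    -- `∨̃` is the join of L6
    (∀ z ∈ BLETK Bool, ∀ w ∈ BLETK Bool,
      le6 z (tor z w) ∧ le6 w (tor z w) ∧
        ∀ u ∈ BLETK Bool, le6 z u → le6 w u → le6 (tor z w) u) ∧
    -- the restriction of L6 to {T₀, b, n, F₀} is Belnap's lattice L4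
    (∀ z ∈ ({vT0, vb, vn, vF0} : Set (Bool × Bool × Bool)),
      ∀ w ∈ ({vT0, vb, vn, vF0} : Set (Bool × Bool × Bool)),
        (le6 z w ↔ (z = w ∨ z = vF0 ∨ w = vT0))) := by
  simp only [mem_BLETK_bool_iff]
  exact ⟨tand_isMeet_le6, tor_isJoin_le6, fun _ hz _ hw => le6_iff_belnap hz hw⟩
end

section
/- In the six-valued matrix M₆, the formula ¬(A → B) semantically entails A: for every valuation v over M₆, if v(¬(A→B)) is designated then v(A) is designated. However, in the degree-preserving sense this fails: there exist z, w in the six-element domain with ¬̃(z →̃ w) not ≤ z in the lattice order of A₆ (e.g. z = b, w = n, where ¬̃(b →̃ n) = n ⊄ b). -/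
variable {B : Type*} [BooleanAlgebra B]

/-- Propositional formulas over the signature of `LET_K`. -/
inductive Fm where
  | var : ℕ → Fm
  | and : Fm → Fm → Fm
  | or : Fm → Fm → Fm
  | imp : Fm → Fm → Fm
  | neg : Fm → Fm
  | circ : Fm → Fm


theorem fst_tneg_timp_le (z w : B × B × B) : (tneg (timp z w)).1 ≤ z.1 := inf_le_left

theorem fst_eq_top_of_fst_tneg_timp_eq_top {z w : B × B × B}
    (h : (tneg (timp z w)).1 = ⊤) : z.1 = ⊤ :=
  top_le_iff.mp (h ▸ fst_tneg_timp_le z w)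

theorem vb_mem_BLETK : vb ∈ BLETK Bool := ⟨by decide, by decide⟩

theorem vn_mem_BLETK : vn ∈ BLETK Bool := ⟨by decide, by decide⟩

theorem tneg_timp_vb_vn : tneg (timp vb vn) = vn := by decide

theorem tand_vn_vb_ne : tand vn vb ≠ vn := by decide

theorem stmt18 :
    -- ¬(A → B) semantically entails A in the matrix M₆
    (∀ v : Fm → Bool × Bool × Bool,
      (∀ A, v A ∈ BLETK Bool) →
      (∀ A B, v (Fm.and A B) = tand (v A) (v B)) →
      (∀ A B, v (Fm.or A B) = tor (v A) (v B)) →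
      (∀ A B, v (Fm.imp A B) = timp (v A) (v B)) →
      (∀ A, v (Fm.neg A) = tneg (v A)) →
      (∀ A, v (Fm.circ A) = tcirc (v A)) →
      ∀ A B, (v (Fm.neg (Fm.imp A B))).1 = true → (v A).1 = true) ∧
    -- but degree-preservation fails: ¬̃(z →̃ w) ≰ z for some z, w
    (∃ z ∈ BLETK Bool, ∃ w ∈ BLETK Bool,
      ¬ tand (tneg (timp z w)) z = tneg (timp z w)) ∧
    -- e.g. z = b, w = n, where ¬̃(b →̃ n) = n ⊄ b
    (tneg (timp vb vn) = vn ∧ ¬ tand (tneg (timp vb vn)) vb = tneg (timp vb vn)) := by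
  have hfails : ¬ tand (tneg (timp vb vn)) vb = tneg (timp vb vn) := by
    rw [tneg_timp_vb_vn]
    exact tand_vn_vb_ne
  refine ⟨?_, ⟨vb, vb_mem_BLETK, vn, vn_mem_BLETK, hfails⟩, tneg_timp_vb_vn, hfails⟩
  intro v _ _ _ himp hneg _ A B h
  rw [hneg, himp] at h
  exact fst_eq_top_of_fst_tneg_timp_eq_top h
end
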